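/- Color ignorance: fix 1 ≤ m ≤ n and 𝔦,𝔧,𝔨,𝔩 ∈ {0,1}^m. For all i, j ∈ {0,1}^n with i_{[1,m]} = 𝔦 and j_{[1,m]} = 𝔧, the sum of L^n(i,j;k,l) over all k, l ∈ {0,1}^n satisfying k_{[1,m]} = 𝔨 and l_{[1,m]} = 𝔩 equals L^m(𝔦,𝔧;𝔨,𝔩). -/

import Mathlib

open Finset

/-- The single-colored vertex weight matrix `L¹`. -/
def L1 (t : ℝ) : Bool → Bool → Bool → Bool → ℝ
  | true,  true,  true,  true  => t
  | true,  true,  false, false => 1 - t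
  | true,  false, true,  false => 1
  | false, true,  false, true  => 1
  | false, false, false, false => 1
  | _, _, _, _ => 0

/-- The `r`-fold projection `s_r(x)`: parity of the sum of the first `r` coordinates. -/
def sproj {n : ℕ} (x : Fin n → Bool) (r : Fin n) : Bool :=
  decide ((∑ m ∈ Finset.univ.filter (fun m => m ≤ r), (if x m then (1 : ℕ) else 0)) % 2 = 1)

/-- The modified minimum `𝔪𝔦𝔫` of a (nonempty) family: `0` if both `t` and `1 - t`
occur among its values, the ordinary minimum otherwise. -/
noncomputable def mminOver (t : ℝ) {n : ℕ} (f : Fin (n + 1) → ℝ) : ℝ := by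
  classical
  exact if (∃ r, f r = t) ∧ (∃ r, f r = 1 - t) then 0
    else Finset.univ.inf' Finset.univ_nonempty f

/-- Binary modified minimum. -/
noncomputable def mmin (t x y : ℝ) : ℝ := by
  classical
  exact if (x = t ∧ y = 1 - t) ∨ (x = 1 - t ∧ y = t) then 0 else min x y

/-- The colored vertex weight matrix `Lⁿ` (here with `n + 1` colors). -/
noncomputable def Ln (t : ℝ) {n : ℕ} (i j k l : Fin (n + 1) → Bool) : ℝ :=
  mminOver t (fun r => L1 t (sproj i r) (sproj j r) (sproj k r) (sproj l r))


/-!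
Induct on the number of colours, splitting off the last one. The weights entering
`Lⁿ⁺¹(i, j; k, l)` are those of `Lⁿ` on the truncations plus the entry `L¹(α, β; γ, δ)` of the
last colour, where `α, β` are fixed by `i, j` and, since `γ` is the last bit of `k` xor the
parity of the earlier ones (likewise `δ`), `(γ, δ)` runs over all four pairs as the last bits of
`k, l` vary. Each row of `L¹` is `(1, 0, 0, 0)` or `(t, 1 - t, 0, 0)` up to order, and for
weights `w` in `{0, t, 1 - t, 1}` one has `𝔪𝔦𝔫(w, 0) = 0`, `𝔪𝔦𝔫(w, 1) = 𝔪𝔦𝔫 w` and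
`𝔪𝔦𝔫(w, t) + 𝔪𝔦𝔫(w, 1 - t) = 𝔪𝔦𝔫 w`: if exactly one of `t`, `1 - t` occurs in `w`, one summand
vanishes and the other is `min w`; if neither does, `min w ∈ {0, 1}`.
-/

theorem Fin.univ_inf'_snoc {α : Type*} [LinearOrder α] {n : ℕ} (f : Fin (n + 1) → α) (v : α) :
    univ.inf' univ_nonempty (snoc f v : Fin (n + 2) → α) = min (univ.inf' univ_nonempty f) v :=
  eq_of_forall_le_iff fun c => by simp [Finset.le_inf'_iff, Fin.forall_fin_succ']

theorem Fin.take_snoc_of_le {α : Type*} {m n : ℕ} (h : m ≤ n) (v : Fin n → α) (x : α) :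
    take m (h.trans n.le_succ) (snoc v x : Fin (n + 1) → α) = take m h v := by
  rw [← take_init, init_snoc]

theorem L1_mem (t : ℝ) (a b c d : Bool) : L1 t a b c d ∈ ({0, t, 1 - t, 1} : Set ℝ) := by
  cases a <;> cases b <;> cases c <;> cases d <;> simp [L1]

section Projection

variable {n : ℕ}

theorem sproj_castSucc (x : Fin (n + 1) → Bool) (r : Fin n) :
    sproj x r.castSucc = sproj (Fin.init x) r := by
  unfold sproj
  congr 1
  rw [sum_filter, sum_filter, Fin.sum_univ_castSucc]
  simp [(Fin.castSucc_lt_last r).not_ge, Fin.castSucc_le_castSucc_iff, Fin.init]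
  rfl

theorem sproj_last_succ (x : Fin (n + 2) → Bool) :
    sproj x (Fin.last _) = xor (x (Fin.last _)) (sproj (Fin.init x) (Fin.last _)) := by
  have parity (S : ℕ) (b : Bool) :
      decide ((S + if b then 1 else 0) % 2 = 1) = xor b (decide (S % 2 = 1)) := by
    rcases Nat.mod_two_eq_zero_or_one S with h | h <;> cases b <;> simp [Nat.add_mod, h]
  simp only [sproj, Fin.le_last, filter_true, Fin.init]
  rw [Fin.sum_univ_castSucc]
  exact parity _ _

end Projection

section ModifiedMinimum

variable {t : ℝ} {n : ℕ}

open scoped Classical in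
theorem mminOver_snoc (F : Fin (n + 1) → ℝ) (v : ℝ) :
    mminOver t (Fin.snoc F v) =
      if ((∃ r, F r = t) ∨ v = t) ∧ ((∃ r, F r = 1 - t) ∨ v = 1 - t) then 0
      else min (univ.inf' univ_nonempty F) v := by
  simp only [mminOver, Fin.exists_fin_succ', Fin.snoc_castSucc, Fin.snoc_last, Fin.univ_inf'_snoc]

theorem mminOver_snoc_zero (F : Fin (n + 1) → ℝ) (hF : ∀ r, 0 ≤ F r) :
    mminOver t (Fin.snoc F 0) = 0 := by
  rw [mminOver_snoc]
  split_ifs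
  · rfl
  · exact min_eq_right (le_inf' _ _ fun r _ => hF r)

theorem mminOver_snoc_one (ht0 : t ≠ 0) (ht1 : t ≠ 1) (F : Fin (n + 1) → ℝ)
    (hF : ∀ r, F r ≤ 1) : mminOver t (Fin.snoc F 1) = mminOver t F := by
  have h1 : (1 : ℝ) ≠ 1 - t := by contrapose! ht0; linarith
  rw [mminOver_snoc, mminOver]
  simp only [ht1.symm, h1, or_false]
  split_ifs
  · rfl
  · exact min_eq_left ((inf'_le _ (mem_univ 0)).trans (hF 0))

theorem mminOver_snoc_add_snoc_one_sub (ht0 : 0 ≤ t) (ht1 : t ≤ 1) (ht2 : t ≠ 1 / 2)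
    (F : Fin (n + 1) → ℝ) (hF : ∀ r, F r ∈ ({0, t, 1 - t, 1} : Set ℝ)) :
    mminOver t (Fin.snoc F t) + mminOver t (Fin.snoc F (1 - t)) = mminOver t F := by
  have htne : t ≠ 1 - t := by contrapose! ht2; linarith
  rw [mminOver_snoc, mminOver_snoc, mminOver]
  simp only [htne, htne.symm, or_true, or_false, true_and, and_true]
  by_cases h1 : ∃ r, F r = t <;> by_cases h2 : ∃ r, F r = 1 - t
  · simp [h1, h2]
  · have ⟨r, hr⟩ := h1
    simpa [h1, h2] using ⟨r, hr.le⟩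
  · have ⟨r, hr⟩ := h2
    simpa [h1, h2] using ⟨r, hr.le⟩
  · simp only [h1, h2, and_false, if_false]
    obtain ⟨b, -, hb⟩ := exists_mem_eq_inf' univ_nonempty F
    rw [hb]
    rcases hF b with h | h | h | h
    · rw [h, min_eq_left ht0, min_eq_left (by linarith), add_zero]
    · exact absurd ⟨b, h⟩ h1
    · exact absurd ⟨b, h⟩ h2
    · rw [h, min_eq_right ht1, min_eq_right (by linarith), add_sub_cancel]

end ModifiedMinimum

section LastColor

variable {t : ℝ} {n : ℕ}

def colorWeights (t : ℝ) (i j k l : Fin n → Bool) (r : Fin n) : ℝ :=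
  L1 t (sproj i r) (sproj j r) (sproj k r) (sproj l r)

theorem colorWeights_succ (i j k l : Fin (n + 2) → Bool) :
    colorWeights t i j k l =
      Fin.snoc (colorWeights t (Fin.init i) (Fin.init j) (Fin.init k) (Fin.init l))
        (colorWeights t i j k l (Fin.last _)) := by
  ext r
  cases r using Fin.lastCases <;> simp [colorWeights, sproj_castSucc]

theorem sum_mminOver_snoc_L1 (ht0 : 0 < t) (ht1 : t < 1) (ht2 : t ≠ 1 / 2)
    (F : Fin (n + 1) → ℝ) (hF : ∀ r, F r ∈ ({0, t, 1 - t, 1} : Set ℝ)) (α β : Bool) :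
    ∑ γδ : Bool × Bool, mminOver t (Fin.snoc F (L1 t α β γδ.1 γδ.2)) = mminOver t F := by
  have hF0 (r) : 0 ≤ F r := by rcases hF r with h | h | h | h <;> rw [h] <;> linarith
  have hF1 (r) : F r ≤ 1 := by rcases hF r with h | h | h | h <;> rw [h] <;> linarith
  have h0 := mminOver_snoc_zero (t := t) F hF0
  have h1 := mminOver_snoc_one ht0.ne' ht1.ne F hF1
  have h2 := mminOver_snoc_add_snoc_one_sub ht0.le ht1.le ht2 F hF
  cases α <;> cases β <;> simp only [Fintype.sum_prod_type, Fintype.sum_bool, L1, h0, h1] <;>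
    linarith

theorem sum_Ln_snoc (ht0 : 0 < t) (ht1 : t < 1) (ht2 : t ≠ 1 / 2)
    (i j : Fin (n + 2) → Bool) (k l : Fin (n + 1) → Bool) :
    ∑ ab : Bool × Bool, Ln t i j (Fin.snoc k ab.1) (Fin.snoc l ab.2) =
      Ln t (Fin.init i) (Fin.init j) k l := by
  set W := colorWeights t (Fin.init i) (Fin.init j) k l
  set c := sproj k (Fin.last _)
  set d := sproj l (Fin.last _)
  have hshift : Function.Bijective fun ab : Bool × Bool => (xor ab.1 c, xor ab.2 d) :=
    Function.Involutive.bijective fun ab => by simp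
  calc ∑ ab : Bool × Bool, Ln t i j (Fin.snoc k ab.1) (Fin.snoc l ab.2)
      = ∑ ab : Bool × Bool, mminOver t (Fin.snoc W
          (L1 t (sproj i (Fin.last _)) (sproj j (Fin.last _)) (xor ab.1 c) (xor ab.2 d))) := by
        refine Fintype.sum_congr _ _ fun ab => ?_
        change mminOver t (colorWeights t i j _ _) = _
        rw [colorWeights_succ]
        simp [W, c, d, colorWeights, sproj_last_succ]
    _ = ∑ γδ : Bool × Bool, mminOver t (Fin.snoc W
          (L1 t (sproj i (Fin.last _)) (sproj j (Fin.last _)) γδ.1 γδ.2)) :=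
        Fintype.sum_bijective _ hshift _ _ fun _ => rfl
    _ = Ln t (Fin.init i) (Fin.init j) k l :=
        sum_mminOver_snoc_L1 ht0 ht1 ht2 W (fun r => L1_mem ..) _ _

end LastColor

theorem sum_Ln_filter_take {t : ℝ} (ht0 : 0 < t) (ht1 : t < 1) (ht2 : t ≠ 1 / 2) {m n : ℕ}
    (h : m ≤ n) (fk fl : Fin (m + 1) → Bool) (i j : Fin (n + 1) → Bool) :
    ∑ p ∈ univ.filter (fun p : (Fin (n + 1) → Bool) × (Fin (n + 1) → Bool) =>
        Fin.take (m + 1) (Nat.succ_le_succ h) p.1 = fk ∧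
          Fin.take (m + 1) (Nat.succ_le_succ h) p.2 = fl),
      Ln t i j p.1 p.2 =
    Ln t (Fin.take (m + 1) (Nat.succ_le_succ h) i) (Fin.take (m + 1) (Nat.succ_le_succ h) j)
      fk fl := by
  induction n, h using Nat.le_induction with
  | base => simp [sum_filter, Fintype.sum_prod_type, ite_and]
  | succ n h ih =>
    rw [← Fin.take_init _ (Nat.succ_le_succ h) i, ← Fin.take_init _ (Nat.succ_le_succ h) j, ← ih]
    simp_rw [← sum_Ln_snoc ht0 ht1 ht2 i j]
    rw [← sum_product']
    exact sum_nbij'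
      (fun p => ((Fin.init p.1, Fin.init p.2), (p.1 (Fin.last _), p.2 (Fin.last _))))
      (fun q => (Fin.snoc q.1.1 q.2.1, Fin.snoc q.1.2 q.2.2))
      (by simp) (by simp [Fin.take_snoc_of_le, h]) (by simp) (by simp) (by simp)

/-- color ignorance. Summing `Lⁿ` over outputs whose truncation to the
first `m` colors is fixed recovers the corresponding entry of `Lᵐ`. -/
theorem Ln_color_ignorance (t : ℝ) (ht0 : 0 < t) (ht1 : t < 1) (ht2 : t ≠ 1 / 2)
    (m n : ℕ) (hmn : m ≤ n)
    (fi fj fk fl : Fin (m + 1) → Bool)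
    (i j : Fin (n + 1) → Bool)
    (hi : (fun r : Fin (m + 1) => i (Fin.castLE (by omega) r)) = fi)
    (hj : (fun r : Fin (m + 1) => j (Fin.castLE (by omega) r)) = fj) :
    ∑ p ∈ Finset.univ.filter
        (fun p : (Fin (n + 1) → Bool) × (Fin (n + 1) → Bool) =>
          (fun r : Fin (m + 1) => p.1 (Fin.castLE (by omega) r)) = fk ∧
          (fun r : Fin (m + 1) => p.2 (Fin.castLE (by omega) r)) = fl),
        Ln t i j p.1 p.2 = Ln t fi fj fk fl := by
  subst hi hj
  exact sum_Ln_filter_take ht0 ht1 ht2 hmn fk fl i j
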